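/- For every n ≥ 2, the number of permutations π ∈ S_n that avoid both generalized patterns 1-23 and 1-32 and satisfy π_n ≠ 1 equals (n-1)·I_{n-2}, where I_m is the number of involutions in S_m. -/

import Mathlib

/-!
In a permutation avoiding both 1-23 and 1-32 the value 1 sits in one of the last two positions:
otherwise 1 and the two entries following it would form an occurrence of one of the patterns.
When 1 is in one of the last two positions, deleting the last entry (and standardizing) neither
creates nor destroys occurrences, since an occurrence using the last position would need an
entry below 1. So an avoider of length `m + 2` not ending in 1 is the same as a choice of its
last entry (`m + 1` ways) together with an avoider of length `m + 1` ending in its minimum,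
i.e. with an avoider of length `m`. The same decomposition shows that the numbers `a_m` of
avoiders satisfy `a_{m+2} = a_{m+1} + (m + 1) a_m`, the recurrence of the involution numbers:
an involution of `[m + 2]` either fixes 1, or exchanges 1 with one of `m + 1` points `b`, and
then multiplying by the transposition `(1 b)` leaves an involution fixing both.
-/

/-- `π` avoids the generalized pattern 1-23. -/
def Avoids1d23 {n : ℕ} (π : Equiv.Perm (Fin n)) : Prop :=
  ¬ ∃ (i j : Fin n) (h : j.1 + 1 < n), i < j ∧ π i < π j ∧ π j < π ⟨j.1 + 1, h⟩

/-- `π` avoids the generalized pattern 1-32. -/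
def Avoids1d32 {n : ℕ} (π : Equiv.Perm (Fin n)) : Prop :=
  ¬ ∃ (i j : Fin n) (h : j.1 + 1 < n), i < j ∧ π i < π ⟨j.1 + 1, h⟩ ∧ π ⟨j.1 + 1, h⟩ < π j

/-- The number of involutions in the symmetric group `S m`. -/
noncomputable def invCount (m : ℕ) : ℕ := Nat.card {σ : Equiv.Perm (Fin m) // σ * σ = 1}

open Equiv Function

theorem card_subtype_eq_sum_card_fiber {α β : Type*} [Finite α] [Fintype β] (f : α → β)
    (P : α → Prop) : Nat.card {x // P x} = ∑ v, Nat.card {x // f x = v ∧ P x} := by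
  rw [← Nat.card_congr (Equiv.sigmaFiberEquiv fun x : {x // P x} => f x), Nat.card_sigma]
  refine Finset.sum_congr rfl fun v _ => Nat.card_congr ?_
  exact (subtypeSubtypeEquivSubtypeInter P (f · = v)).trans
    (subtypeEquivRight fun _ => and_comm)

theorem card_subtype_eq_card_and_add_card_not_and {α : Type*} [Finite α] (Q P : α → Prop) :
    Nat.card {x // P x} = Nat.card {x // Q x ∧ P x} + Nat.card {x // ¬Q x ∧ P x} := by
  classical
  rw [← Nat.card_sum]
  refine Nat.card_congr ((sumCompl fun x : {x // P x} => Q x).symm.trans (sumCongr ?_ ?_))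
  · exact (subtypeSubtypeEquivSubtypeInter P Q).trans (subtypeEquivRight fun _ => and_comm)
  · exact (subtypeSubtypeEquivSubtypeInter P (¬Q ·)).trans (subtypeEquivRight fun _ => and_comm)

theorem card_subtype_perm_fin_of_le_one {n : ℕ} (hn : n ≤ 1) {P : Perm (Fin n) → Prop}
    (h : P 1) : Nat.card {π // P π} = 1 := by
  have : Subsingleton (Fin n) := Fin.subsingleton_iff_le_one.mpr hn
  exact Nat.card_eq_one_iff_exists.mpr ⟨⟨1, h⟩, fun _ => Subsingleton.elim _ _⟩

namespace Equiv.Perm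

section removeNth

variable {n : ℕ}

-- Delete position `p` from `π` and standardize: the pattern formed by the remaining entries.
def removeNth (π : Perm (Fin (n + 1))) (p : Fin (n + 1)) : Perm (Fin n) :=
  (finSuccAboveEquiv p).trans <|
    (π.subtypeEquiv (p := (· ≠ p)) (q := (· ≠ π p)) fun _ => π.injective.ne_iff.symm).trans
      (finSuccAboveEquiv (π p)).symm

theorem succAbove_removeNth (π : Perm (Fin (n + 1))) (p : Fin (n + 1)) (i : Fin n) :
    (π p).succAbove (π.removeNth p i) = π (p.succAbove i) :=
  congrArg Subtype.val ((finSuccAboveEquiv (π p)).apply_symm_apply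
    ⟨π (p.succAbove i), π.injective.ne (p.succAbove_ne i)⟩)

theorem removeNth_lt_removeNth_iff (π : Perm (Fin (n + 1))) (p : Fin (n + 1)) (i j : Fin n) :
    π.removeNth p i < π.removeNth p j ↔ π (p.succAbove i) < π (p.succAbove j) := by
  rw [← succAbove_removeNth, ← succAbove_removeNth, Fin.succAbove_lt_succAbove_iff]

theorem removeNth_mul (σ τ : Perm (Fin (n + 1))) (p : Fin (n + 1)) :
    (σ * τ).removeNth p = σ.removeNth (τ p) * τ.removeNth p := by
  ext1 i
  apply (σ (τ p)).succAbove_right_injective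
  rw [mul_apply, succAbove_removeNth, succAbove_removeNth]
  exact succAbove_removeNth (σ * τ) p i

theorem removeNth_one (p : Fin (n + 1)) : (1 : Perm (Fin (n + 1))).removeNth p = 1 := by
  ext1 i
  apply p.succAbove_right_injective
  exact succAbove_removeNth 1 p i

theorem apply_removeNth_injective (p : Fin (n + 1)) :
    Injective fun π : Perm (Fin (n + 1)) => (π p, π.removeNth p) := by
  intro π π' h
  obtain ⟨hp, hr⟩ := Prod.mk.inj h
  ext1 x
  rcases p.eq_self_or_eq_succAbove x with rfl | ⟨i, rfl⟩
  · exact hp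
  · rw [← succAbove_removeNth, ← succAbove_removeNth, hp, hr]

theorem card_subtype_apply_removeNth (p : Fin (n + 1)) (Q : Fin (n + 1) → Prop)
    (P : Perm (Fin n) → Prop) :
    Nat.card {π : Perm (Fin (n + 1)) // Q (π p) ∧ P (π.removeNth p)} =
      Nat.card {v // Q v} * Nat.card {ρ // P ρ} := by
  have hbij : Bijective fun π : Perm (Fin (n + 1)) => (π p, π.removeNth p) := by
    rw [Fintype.bijective_iff_injective_and_card]
    refine ⟨apply_removeNth_injective p, ?_⟩
    simp [Fintype.card_perm, Nat.factorial_succ]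
  rw [← Nat.card_prod, ← Nat.card_congr subtypeProdEquivProd]
  exact Nat.card_congr ((Equiv.ofBijective _ hbij).subtypeEquiv fun _ => Iff.rfl)

theorem card_subtype_apply_eq_removeNth (p v : Fin (n + 1)) (P : Perm (Fin n) → Prop) :
    Nat.card {π : Perm (Fin (n + 1)) // π p = v ∧ P (π.removeNth p)} =
      Nat.card {ρ // P ρ} := by
  rw [card_subtype_apply_removeNth p (· = v), Nat.card_unique, one_mul]

theorem removeNth_mul_self_eq_one_iff {σ : Perm (Fin (n + 1))} {p : Fin (n + 1)} (h : σ p = p) :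
    σ.removeNth p * σ.removeNth p = 1 ↔ σ * σ = 1 := by
  have hmul : (σ * σ).removeNth p = σ.removeNth p * σ.removeNth p := by rw [removeNth_mul, h]
  rw [← hmul, ← removeNth_one p]
  refine ⟨fun hρ => apply_removeNth_injective p (Prod.ext ?_ hρ), fun hσ => by rw [hσ]⟩
  simp [h]

theorem removeNth_apply_eq_self_iff {σ : Perm (Fin (n + 1))} {p : Fin (n + 1)} (h : σ p = p)
    (q : Fin n) : σ.removeNth p q = q ↔ σ (p.succAbove q) = p.succAbove q := by
  rw [← succAbove_removeNth, h, p.succAbove_right_injective.eq_iff]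

end removeNth

section swap

variable {α : Type*} [DecidableEq α]

theorem mul_swap_mul_self_of_commute {σ : Perm α} {a b : α}
    (h : Commute σ (swap a b)) : σ * swap a b * (σ * swap a b) = σ * σ := by
  rw [h.symm.mul_mul_mul_comm, swap_mul_self, mul_one]

theorem commute_swap_of_apply_eq_of_apply_eq {σ : Perm α} {a b : α}
    (h : swap (σ a) (σ b) = swap a b) : Commute σ (swap a b) := by
  rw [Commute, SemiconjBy, mul_swap_eq_swap_mul, h]

theorem card_involution_apply_eq (a b : α) :
    Nat.card {σ : Perm α // σ a = b ∧ σ * σ = 1} =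
      Nat.card {σ : Perm α // σ a = a ∧ σ b = b ∧ σ * σ = 1} := by
  refine Nat.card_congr ((Equiv.mulRight (swap a b)).subtypeEquiv fun σ => ?_)
  simp only [coe_mulRight]
  constructor
  · rintro ⟨hab, hσ⟩
    have hba : σ b = a := by rw [← hab, ← mul_apply, hσ, one_apply]
    have hc : Commute σ (swap a b) :=
      commute_swap_of_apply_eq_of_apply_eq (by rw [hab, hba, swap_comm])
    refine ⟨by simp [hba], by simp [hab], by rw [mul_swap_mul_self_of_commute hc, hσ]⟩
  · rintro ⟨ha, hb, hτ⟩
    have hc : Commute (σ * swap a b) (swap a b) :=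
      commute_swap_of_apply_eq_of_apply_eq (by rw [ha, hb])
    refine ⟨by simpa using hb, ?_⟩
    have := mul_swap_mul_self_of_commute hc
    rwa [mul_swap_mul_self, hτ] at this

end swap

end Equiv.Perm

open Equiv.Perm

theorem card_involution_apply_eq_self {n : ℕ} (p : Fin (n + 1)) :
    Nat.card {σ : Perm (Fin (n + 1)) // σ p = p ∧ σ * σ = 1} = invCount n := by
  rw [invCount, ← card_subtype_apply_eq_removeNth p p]
  exact Nat.card_congr (subtypeEquivRight fun _ =>
    and_congr_right fun h => (removeNth_mul_self_eq_one_iff h).symm)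

theorem card_involution_apply_zero_eq_succ {n : ℕ} (k : Fin (n + 1)) :
    Nat.card {σ : Perm (Fin (n + 2)) // σ 0 = k.succ ∧ σ * σ = 1} = invCount n := by
  rw [card_involution_apply_eq, ← card_involution_apply_eq_self k,
    ← card_subtype_apply_eq_removeNth (0 : Fin (n + 2)) 0 fun ρ => ρ k = k ∧ ρ * ρ = 1]
  refine Nat.card_congr (subtypeEquivRight fun σ => and_congr_right fun h => ?_)
  rw [removeNth_apply_eq_self_iff h, removeNth_mul_self_eq_one_iff h, Fin.succAbove_zero]

theorem invCount_add_two (n : ℕ) :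
    invCount (n + 2) = invCount (n + 1) + (n + 1) * invCount n := by
  rw [invCount, card_subtype_eq_sum_card_fiber (fun σ : Perm (Fin (n + 2)) => σ 0),
    Fin.sum_univ_succ, card_involution_apply_eq_self]
  simp only [card_involution_apply_zero_eq_succ, Finset.sum_const, Finset.card_univ,
    Fintype.card_fin, smul_eq_mul]

def Avoids1d23And1d32 {n : ℕ} (π : Perm (Fin n)) : Prop :=
  ∀ i j (h : j.1 + 1 < n), i < j → π j < π i ∨ π ⟨j.1 + 1, h⟩ < π i

theorem avoids1d23_and_avoids1d32_iff {n : ℕ} (π : Perm (Fin n)) :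
    Avoids1d23 π ∧ Avoids1d32 π ↔ Avoids1d23And1d32 π := by
  constructor
  · rintro ⟨h23, h32⟩ i j h hij
    have hij' : i.1 < j.1 := hij
    by_contra! hle
    have hj : π i < π j := lt_of_le_of_ne hle.1 (π.injective.ne hij.ne)
    have hj' : π i < π ⟨j.1 + 1, h⟩ :=
      lt_of_le_of_ne hle.2 (π.injective.ne (Fin.ne_of_val_ne (by simp; omega)))
    rcases lt_or_gt_of_ne (π.injective.ne (Fin.ne_of_val_ne (by simp) : j ≠ ⟨j.1 + 1, h⟩))
      with hlt | hlt
    · exact h23 ⟨i, j, h, hij, hj, hlt⟩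
    · exact h32 ⟨i, j, h, hij, hj', hlt⟩
  · intro hπ
    constructor <;> rintro ⟨i, j, h, hij, h1, h2⟩ <;>
      rcases hπ i j h hij with h3 | h3 <;> order

def MinInLastTwo {n : ℕ} (π : Perm (Fin (n + 1))) : Prop := n ≤ (π.symm 0).1 + 1

theorem Avoids1d23And1d32.minInLastTwo {n : ℕ} {π : Perm (Fin (n + 1))}
    (hπ : Avoids1d23And1d32 π) : MinInLastTwo π := by
  by_contra! hlt
  rw [MinInLastTwo, not_le] at hlt
  have hz : π (π.symm 0) = 0 := π.apply_symm_apply 0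
  rcases hπ (π.symm 0) ⟨(π.symm 0).1 + 1, by omega⟩ (by simp; omega) (by simp [Fin.lt_def])
    with h | h <;> rw [hz] at h <;> exact Fin.not_lt_zero _ h

theorem minInLastTwo_of_apply_last_eq_zero {n : ℕ} {π : Perm (Fin (n + 1))}
    (h : π (Fin.last n) = 0) : MinInLastTwo π := by
  rw [MinInLastTwo, π.symm_apply_eq.mpr h.symm, Fin.val_last]
  omega

theorem avoids1d23And1d32_iff_removeNth_last {n : ℕ} {π : Perm (Fin (n + 1))}
    (h0 : MinInLastTwo π) :
    Avoids1d23And1d32 π ↔ Avoids1d23And1d32 (π.removeNth (Fin.last n)) := by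
  have key : ∀ a b : Fin n, π.removeNth (Fin.last n) a < π.removeNth (Fin.last n) b ↔
      π a.castSucc < π b.castSucc := by
    intro a b
    rw [removeNth_lt_removeNth_iff, Fin.succAbove_last]
  constructor
  · intro hπ i j h hij
    rw [key, key]
    exact hπ i.castSucc j.castSucc (by simp only [Fin.val_castSucc]; omega) hij
  · intro hρ i j h hij
    have hij' : i.1 < j.1 := hij
    by_cases hj : j.1 + 1 < n
    · have := hρ ⟨i.1, by omega⟩ ⟨j.1, by omega⟩ hj hij
      rw [key, key] at this
      exact this
    · have hi : 0 < π i := by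
        refine Fin.pos_iff_ne_zero.mpr fun hi => ?_
        rw [MinInLastTwo, ← hi, symm_apply_apply] at h0
        omega
      have hlt := (π.symm 0).isLt
      rw [MinInLastTwo] at h0
      obtain hz | hz : π.symm 0 = j ∨ π.symm 0 = ⟨j.1 + 1, h⟩ := by
        simp only [Fin.ext_iff]; omega
      · left; rwa [← hz, apply_symm_apply]
      · right; rwa [← hz, apply_symm_apply]

theorem avoids1d23And1d32_iff_of_apply_last_ne_zero {m : ℕ} {π : Perm (Fin (m + 2))}
    (hv : π (Fin.last (m + 1)) ≠ 0) :
    Avoids1d23And1d32 π ↔ π.removeNth (Fin.last _) (Fin.last m) = 0 ∧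
      Avoids1d23And1d32 (π.removeNth (Fin.last _)) := by
  rw [← Fin.succAbove_eq_zero_iff hv, succAbove_removeNth, Fin.succAbove_last]
  constructor
  · intro hπ
    have h0 := hπ.minInLastTwo
    have hlast : π.symm 0 ≠ Fin.last (m + 1) := fun h => hv (by rw [← h, apply_symm_apply])
    have hpos : π.symm 0 = (Fin.last m).castSucc := by
      rw [MinInLastTwo] at h0
      rw [Ne, Fin.ext_iff, Fin.val_last] at hlast
      ext; simp; omega
    exact ⟨by rw [← hpos, apply_symm_apply], (avoids1d23And1d32_iff_removeNth_last h0).mp hπ⟩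
  · rintro ⟨h0, hρ⟩
    refine (avoids1d23And1d32_iff_removeNth_last ?_).mpr hρ
    rw [MinInLastTwo, π.symm_apply_eq.mpr h0.symm]
    simp

noncomputable def avoiderCount (n : ℕ) : ℕ :=
  Nat.card {π : Perm (Fin n) // Avoids1d23And1d32 π}

theorem card_avoiders_apply_last_eq_zero (n : ℕ) :
    Nat.card {π : Perm (Fin (n + 1)) // π (Fin.last n) = 0 ∧ Avoids1d23And1d32 π} =
      avoiderCount n := by
  rw [avoiderCount, ← card_subtype_apply_eq_removeNth (Fin.last n) 0]
  exact Nat.card_congr (subtypeEquivRight fun _ => and_congr_right fun h =>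
    avoids1d23And1d32_iff_removeNth_last (minInLastTwo_of_apply_last_eq_zero h))

theorem card_avoiders_apply_last_ne_zero (m : ℕ) :
    Nat.card {π : Perm (Fin (m + 2)) // π (Fin.last (m + 1)) ≠ 0 ∧ Avoids1d23And1d32 π} =
      (m + 1) * avoiderCount m := by
  calc _ = Nat.card {π : Perm (Fin (m + 2)) // π (Fin.last (m + 1)) ≠ 0 ∧
          π.removeNth (Fin.last _) (Fin.last m) = 0 ∧
            Avoids1d23And1d32 (π.removeNth (Fin.last _))} :=
        Nat.card_congr (subtypeEquivRight fun _ =>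
          and_congr_right avoids1d23And1d32_iff_of_apply_last_ne_zero)
    _ = Nat.card {v : Fin (m + 2) // v ≠ 0} *
          Nat.card {ρ : Perm (Fin (m + 1)) // ρ (Fin.last m) = 0 ∧ Avoids1d23And1d32 ρ} :=
        card_subtype_apply_removeNth _ (· ≠ 0)
          fun ρ => ρ (Fin.last m) = 0 ∧ Avoids1d23And1d32 ρ
    _ = (m + 1) * avoiderCount m := by
        simp [card_avoiders_apply_last_eq_zero]

theorem avoiderCount_add_two (m : ℕ) :
    avoiderCount (m + 2) = avoiderCount (m + 1) + (m + 1) * avoiderCount m := by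
  rw [avoiderCount, card_subtype_eq_card_and_add_card_not_and (· (Fin.last (m + 1)) = 0),
    card_avoiders_apply_last_eq_zero, ← card_avoiders_apply_last_ne_zero]

theorem avoiderCount_eq_invCount : ∀ n, avoiderCount n = invCount n
  | 0 | 1 => by
    rw [avoiderCount, invCount,
      card_subtype_perm_fin_of_le_one (P := Avoids1d23And1d32) (by omega)
        fun _ j h => absurd h (by omega),
      card_subtype_perm_fin_of_le_one (P := fun σ => σ * σ = 1) (by omega) (mul_one 1)]
  | n + 2 => by
    rw [avoiderCount_add_two, invCount_add_two, avoiderCount_eq_invCount (n + 1),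
      avoiderCount_eq_invCount n]

theorem count_not_ending_one (n : ℕ) (hn : 2 ≤ n) :
    Nat.card {π : Equiv.Perm (Fin n) // Avoids1d23 π ∧ Avoids1d32 π ∧
      π ⟨n - 1, by omega⟩ ≠ ⟨0, by omega⟩} = (n - 1) * invCount (n - 2) := by
  obtain ⟨m, rfl⟩ : ∃ m, n = m + 2 := ⟨n - 2, by omega⟩
  change _ = (m + 1) * invCount m
  rw [← avoiderCount_eq_invCount, ← card_avoiders_apply_last_ne_zero]
  refine Nat.card_congr (subtypeEquivRight fun π => ?_)
  rw [← and_assoc, avoids1d23_and_avoids1d32_iff, and_comm]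
  rfl
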